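/- Fix a total order on the edges of a graph G on d vertices. Then Y_G = Σ_{S ∈ B_G} (−1)^{|S|} p_{π(S)}, where B_G is the broken circuit complex of G (the collection of edge subsets containing no broken circuit) and π(S) is the partition into connected components of the spanning subgraph induced by S. -/

import Mathlib

open Finset

attribute [local instance] Classical.propDecidable

/-- Homogeneous degree-`d` noncommutative symmetric functions, viewed as
coefficient functions on words of length `d` in the variables. -/
abbrev NCF (d : ℕ) := (Fin d → ℕ) → ℚ

/-- A coloring is proper for the edge family `ends` if the endpoints of every
edge receive distinct colors. -/
def Proper {d : ℕ} {ε : Type*} {C : Type*} (ends : ε → Sym2 (Fin d)) (w : Fin d → C) : Prop :=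
  ∀ (e : ε) (i j : Fin d), ends e = s(i, j) → w i ≠ w j

/-- The noncommutative chromatic symmetric function `Y_G`. -/
noncomputable def Y {d : ℕ} {ε : Type*} (ends : ε → Sym2 (Fin d)) : NCF d :=
  fun w => if Proper ends w then 1 else 0

/-- Noncommutative monomial symmetric function indexed by a set partition. -/
noncomputable def mFun {d : ℕ} (π : Setoid (Fin d)) : NCF d :=
  fun w => if (∀ i j, w i = w j ↔ π i j) then 1 else 0

/-- Noncommutative power sum symmetric function indexed by a set partition. -/
noncomputable def pFun {d : ℕ} (π : Setoid (Fin d)) : NCF d :=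
  fun w => if (∀ i j, π i j → w i = w j) then 1 else 0

/-- Noncommutative elementary symmetric function indexed by a set partition. -/
noncomputable def eFun {d : ℕ} (π : Setoid (Fin d)) : NCF d :=
  fun w => if (∀ i j, i ≠ j → π i j → w i ≠ w j) then 1 else 0

noncomputable instance setoidFintype (d : ℕ) : Fintype (Setoid (Fin d)) :=
  Fintype.ofInjective (fun s : Setoid (Fin d) => (s : Fin d → Fin d → Prop))
    (fun s t h => Setoid.ext fun a b => by
      have := congrFun (congrFun h a) b; simpa using this.to_iff)

/-- Position action of a permutation on words/NCFs. -/
noncomputable def act {d : ℕ} (δ : Equiv.Perm (Fin d)) (f : NCF d) : NCF d :=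
  fun w => f (w ∘ δ)

/-- The induction operator `↑`, repeating the last variable. -/
noncomputable def up {n : ℕ} (f : NCF (n + 1)) : NCF (n + 2) :=
  fun w => if w (Fin.last (n + 1)) = w ⟨n, by omega⟩ then f (fun i => w i.castSucc) else 0

/-- Vertex map collapsing the last vertex onto the next-to-last one (for contraction). -/
def collapse {n : ℕ} : Fin (n + 2) → Fin (n + 1) :=
  fun i => if h : (i : ℕ) < n + 1 then ⟨i, h⟩ else ⟨n, by omega⟩

/-- The partition of `[d]` into connected components of the spanning subgraph with edge set `S`. -/
def components {d : ℕ} {ε : Type*} (ends : ε → Sym2 (Fin d)) (S : Finset ε) :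
    Setoid (Fin d) :=
  Relation.EqvGen.setoid (fun i j => ∃ e ∈ S, ends e = s(i, j))

/-- The size of the block of `π` containing `i`. -/
noncomputable def blockCard {n : ℕ} (π : Setoid (Fin n)) (i : Fin n) : ℕ :=
  (Finset.univ.filter (fun j => π i j)).card

/-- The multiset of block sizes (the type `λ(π)`) of a set partition. -/
noncomputable def sizes {n : ℕ} (π : Setoid (Fin n)) : Multiset ℕ :=
  (Finset.univ.image (fun i => Finset.univ.filter (fun j => π i j))).val.map Finset.card

/-- `σ ≡ᵢ τ` : same type and blocks containing `i` of equal size. -/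
def cls {n : ℕ} (i : Fin n) (σ τ : Setoid (Fin n)) : Prop :=
  sizes σ = sizes τ ∧ blockCard σ i = blockCard τ i

/-- Congruence modulo `i` of noncommutative symmetric functions: the amalgamated
coefficients of their `e`-expansions agree on every `≡ᵢ`-class. -/
noncomputable def EquivI {n : ℕ} (i : Fin n) (F G : NCF n) : Prop :=
  ∃ a b : Setoid (Fin n) → ℚ,
    F = ∑ τ : Setoid (Fin n), a τ • eFun τ ∧
    G = ∑ τ : Setoid (Fin n), b τ • eFun τ ∧
    ∀ τ, (∑ σ : Setoid (Fin n), if cls i σ τ then a σ else 0)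
        = ∑ σ : Setoid (Fin n), if cls i σ τ then b σ else 0

/-- `(e)`-positivity with respect to the congruence modulo `i`. -/
noncomputable def EPos {n : ℕ} (i : Fin n) (F : NCF n) : Prop :=
  ∃ a : Setoid (Fin n) → ℚ,
    F = ∑ τ : Setoid (Fin n), a τ • eFun τ ∧
    ∀ τ, 0 ≤ ∑ σ : Setoid (Fin n), if cls i σ τ then a σ else 0

/-- `(e)`-positivity of a labeled graph: for some labeling and some congruence. -/
noncomputable def EPosG {d : ℕ} {ε : Type*} (ends : ε → Sym2 (Fin d)) : Prop :=
  ∃ (δ : Equiv.Perm (Fin d)) (i : Fin d),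
    EPos i (Y (fun e => (ends e).map δ))

/-- Extend a partition of `{0,…,n}` to one of `{0,…,n+m}`: old blocks are kept,
the new elements (indices `≥ n+1`) satisfying `Q` are merged into the block of
the old last element `n`, and the remaining new elements form singletons. -/
def extendB {n : ℕ} (m : ℕ) (π : Setoid (Fin (n + 1))) (Q : ℕ → Prop) :
    Setoid (Fin (n + 1 + m)) where
  r x y := x = y ∨
    (∃ (hx : (x : ℕ) < n + 1) (hy : (y : ℕ) < n + 1), π ⟨x, hx⟩ ⟨y, hy⟩) ∨
    (((∃ hx : (x : ℕ) < n + 1, π ⟨x, hx⟩ (Fin.last n)) ∨ (n + 1 ≤ (x : ℕ) ∧ Q (x : ℕ))) ∧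
     ((∃ hy : (y : ℕ) < n + 1, π ⟨y, hy⟩ (Fin.last n)) ∨ (n + 1 ≤ (y : ℕ) ∧ Q (y : ℕ))))
  iseqv := by
    constructor
    · intro x; exact Or.inl rfl
    · rintro x y (rfl | ⟨hx, hy, h⟩ | ⟨h1, h2⟩)
      · exact Or.inl rfl
      · exact Or.inr (Or.inl ⟨hy, hx, π.symm h⟩)
      · exact Or.inr (Or.inr ⟨h2, h1⟩)
    · rintro x y z (rfl | ⟨hx, hy, h⟩ | ⟨h1, h2⟩) h'
      · exact h'
      · rcases h' with rfl | ⟨hy', hz, h''⟩ | ⟨h1', h2'⟩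
        · exact Or.inr (Or.inl ⟨hx, hy, h⟩)
        · exact Or.inr (Or.inl ⟨hx, hz, π.trans h h''⟩)
        · rcases h1' with ⟨hy', hB⟩ | ⟨hge, _⟩
          · exact Or.inr (Or.inr ⟨Or.inl ⟨hx, π.trans h hB⟩, h2'⟩)
          · omega
      · rcases h' with rfl | ⟨hy', hz, h''⟩ | ⟨h1', h2'⟩
        · exact Or.inr (Or.inr ⟨h1, h2⟩)
        · rcases h2 with ⟨hy2, hB⟩ | ⟨hge, _⟩
          · exact Or.inr (Or.inr ⟨h1, Or.inl ⟨hz, π.trans (π.trans (π.symm h'') hB) (π.refl _)⟩⟩)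
          · omega
        · exact Or.inr (Or.inr ⟨h1, h2'⟩)

/-- `π + (n+1)` : insert the new element `n+1` into the block containing `n`. -/
def addLast {n : ℕ} (π : Setoid (Fin (n + 1))) : Setoid (Fin (n + 2)) :=
  extendB 1 π (fun _ => True)

/-- `π / (n+1)` : add the new element `n+1` as a singleton block. -/
def addSingleton {n : ℕ} (π : Setoid (Fin (n + 1))) : Setoid (Fin (n + 2)) :=
  extendB 1 π (fun _ => False)

/-- `σ / (d+1),…,(d+m)` : add the new elements as one additional block. -/
def addBlock {d : ℕ} (m : ℕ) (σ : Setoid (Fin d)) : Setoid (Fin (d + m)) where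
  r x y := (∃ (hx : (x : ℕ) < d) (hy : (y : ℕ) < d), σ ⟨x, hx⟩ ⟨y, hy⟩) ∨
    (d ≤ (x : ℕ) ∧ d ≤ (y : ℕ))
  iseqv := by
    constructor
    · intro x
      by_cases h : (x : ℕ) < d
      · exact Or.inl ⟨h, h, σ.refl _⟩
      · exact Or.inr ⟨by omega, by omega⟩
    · rintro x y (⟨hx, hy, h⟩ | ⟨hx, hy⟩)
      · exact Or.inl ⟨hy, hx, σ.symm h⟩
      · exact Or.inr ⟨hy, hx⟩
    · rintro x y z (⟨hx, hy, h⟩ | ⟨hx, hy⟩) (⟨hy', hz, h'⟩ | ⟨hy', hz⟩)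
      · exact Or.inl ⟨hx, hz, σ.trans h h'⟩
      · omega
      · omega
      · exact Or.inr ⟨hx, hz⟩

noncomputable instance setoidLFO (d : ℕ) : LocallyFiniteOrder (Setoid (Fin d)) :=
  Fintype.toLocallyFiniteOrder

/-- The Möbius function of the lattice of set partitions, with values in `ℚ`. -/
noncomputable def muS {d : ℕ} (a b : Setoid (Fin d)) : ℚ :=
  IncidenceAlgebra.mu ℚ a b

/-- Falling factorial `⟨m⟩_i = m(m-1)⋯(m-i+1)` as a rational number. -/
def ffact (m i : ℕ) : ℚ := ∏ j ∈ Finset.range i, ((m : ℚ) - j)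

/-- Rising factorial `(b)_i = b(b+1)⋯(b+i-1)` as a rational number. -/
def rfact (b i : ℕ) : ℚ := ∏ j ∈ Finset.range i, ((b : ℚ) + j)

/-- The path `P_{n+1}` with edges `v_i v_{i+1}`. -/
def pathEnds (n : ℕ) : Fin n → Sym2 (Fin (n + 1)) :=
  fun e => s(e.castSucc, e.succ)

/-- The cycle `C_{n+1}` with edges `v_i v_{i+1}` (indices mod `n+1`). -/
def cycleEnds (n : ℕ) : Fin (n + 1) → Sym2 (Fin (n + 1)) :=
  fun i => s(i, i + 1)

/-- The commutative chromatic symmetric function `X_G` in `N` variables. -/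
noncomputable def Xcomm {d : ℕ} {ε : Type*} (ends : ε → Sym2 (Fin d)) (N : ℕ) :
    MvPolynomial (Fin N) ℚ :=
  ∑ κ : Fin d → Fin N, if Proper ends κ then ∏ i, MvPolynomial.X (κ i) else 0

section Orientations

variable {V : Type*} {ε : Type*}

/-- `o` is an orientation of the graph with edge endpoints `ends`. -/
def IsOrient (ends : ε → Sym2 V) (o : ε → V × V) : Prop :=
  ∀ e, s((o e).1, (o e).2) = ends e

/-- An orientation is acyclic when it admits no directed cycle. -/
def Acyclic (o : ε → V × V) : Prop :=
  ∀ v : V, ¬ Relation.TransGen (fun a b => ∃ e, o e = (a, b)) v v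

/-- `v` is a sink: every edge incident to `v` is directed toward `v`. -/
def IsSink (o : ε → V × V) (v : V) : Prop := ∀ e, (o e).1 ≠ v

/-- The set of acyclic orientations with unique sink `v₀`. -/
def Aset (ends : ε → Sym2 V) (v₀ : V) : Set (ε → V × V) :=
  {o | IsOrient ends o ∧ Acyclic o ∧ IsSink o v₀ ∧ ∀ v, IsSink o v → v = v₀}

end Orientations

/-- A circuit: a closed walk `u_0, u_1, …, u_m, u_0` with distinct vertices and
distinct edges. -/
structure Circuit {d : ℕ} {ε : Type*} (ends : ε → Sym2 (Fin d)) where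
  m : ℕ
  v : Fin (m + 1) → Fin d
  f : Fin (m + 1) → ε
  hv : Function.Injective v
  hf : Function.Injective f
  he : ∀ k, ends (f k) = s(v k, v (k + 1))

/-- The broken circuit obtained from a circuit: its edge set with the largest
edge removed. -/
noncomputable def broken {d : ℕ} {ε : Type*} [LinearOrder ε] {ends : ε → Sym2 (Fin d)}
    (C : Circuit ends) : Finset ε :=
  (Finset.univ.image C.f).erase
    ((Finset.univ.image C.f).max'
      ⟨C.f 0, Finset.mem_image_of_mem _ (Finset.mem_univ _)⟩)

/-- `P(α)`: partitions `τ ≤ π+(d+1)` whose blocks can be listed as `B_1,…,B_l`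
with `|B_i| = α_i` and `d+1 ∈ B_1`. -/
def Pset {d : ℕ} (π : Setoid (Fin (d + 1))) (l : ℕ) (α : Fin l → ℕ) :
    Set (Setoid (Fin (d + 2))) :=
  {τ | τ ≤ addLast π ∧ ∃ B : Fin l → Finset (Fin (d + 2)),
    (∀ x y, τ x y ↔ ∃ i, x ∈ B i ∧ y ∈ B i) ∧
    (∀ i j, i ≠ j → Disjoint (B i) (B j)) ∧
    (∀ i, (B i).card = α i) ∧
    ∃ hl : 0 < l, Fin.last (d + 1) ∈ B ⟨0, hl⟩}

/-- `G + K_{m+1}` : attach a complete graph on `{v_{d}, v_{d+1}, …, v_{d+m}}`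
(`m` new vertices) to the last vertex of a graph `G` on `d+1` vertices. -/
def attachEnds {d : ℕ} {ε : Type*} (ends : ε → Sym2 (Fin (d + 1))) (m : ℕ) :
    ε ⊕ {p : Fin (m + 1) × Fin (m + 1) // p.1 < p.2} → Sym2 (Fin (d + 1 + m))
  | Sum.inl e => (ends e).map (fun x : Fin (d + 1) => (⟨(x : ℕ), by omega⟩ : Fin (d + 1 + m)))
  | Sum.inr p => s(⟨d + (p.1.1 : ℕ), by omega⟩, ⟨d + (p.1.2 : ℕ), by omega⟩)

/-- The disjoint union `G ⊎ K_m`, with the clique on the `m` new vertices. -/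
def disjEnds {d : ℕ} {ε : Type*} (ends : ε → Sym2 (Fin d)) (m : ℕ) :
    ε ⊕ {p : Fin m × Fin m // p.1 < p.2} → Sym2 (Fin (d + m))
  | Sum.inl e => (ends e).map (Fin.castAdd m)
  | Sum.inr p => s(Fin.natAdd d p.1.1, Fin.natAdd d p.1.2)

/-! The coefficient of a word `w` on the right-hand side is the alternating count of the sets `S`
in the broken circuit complex that consist of edges monochromatic under `w`. The set `M` of such
edges contains the largest edge of every circuit whose broken circuit it contains, so if `M` is
nonempty then adding or removing its largest edge is a sign-reversing involution on those `S`;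
if `M` is empty only `S = ∅` survives. Thus the count is `1` exactly when `w` is proper. -/

theorem Finset.sum_neg_one_pow_card_eq_zero_of_insert_erase_mem {α R : Type*} [DecidableEq α]
    [Ring R] {𝓕 : Finset (Finset α)} (a : α) (hinsert : ∀ S ∈ 𝓕, insert a S ∈ 𝓕)
    (herase : ∀ S ∈ 𝓕, S.erase a ∈ 𝓕) : ∑ S ∈ 𝓕, (-1 : R) ^ S.card = 0 := by
  let toggle (S : Finset α) : Finset α := if a ∈ S then S.erase a else insert a S
  refine Finset.sum_involution (fun S _ => toggle S) (fun S _ => ?_) (fun S _ _ => ?_)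
    (fun S hS => ?_) (fun S _ => ?_) <;> by_cases ha : a ∈ S <;>
    simp only [toggle, ha, if_true, if_false]
  · rw [← Finset.card_erase_add_one ha, pow_succ, mul_neg_one, neg_add_cancel]
  · rw [Finset.card_insert_of_notMem ha, pow_succ, mul_neg_one, add_neg_cancel]
  · exact Finset.erase_ne_self.2 ha
  · exact Finset.insert_ne_self.2 ha
  · exact herase S hS
  · exact hinsert S hS
  · simp [Finset.insert_erase ha]
  · simp [Finset.erase_insert ha]

theorem Fin.apply_eq_apply_add_one_of_forall_ne {α : Type*} {m : ℕ} (f : Fin (m + 1) → α)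
    (k₀ : Fin (m + 1)) (h : ∀ k, k ≠ k₀ → f k = f (k + 1)) : f k₀ = f (k₀ + 1) := by
  have walk : ∀ i : Fin (m + 1), f (k₀ + 1 + i) = f (k₀ + 1) := by
    intro i
    induction i using Fin.induction with
    | zero => rw [add_zero]
    | succ i ih =>
      have hne : k₀ + 1 + i.castSucc ≠ k₀ := by
        intro heq
        have : i.castSucc + 1 = Fin.last m + 1 := by
          rw [Fin.last_add_one m]
          exact (add_comm _ _).trans (add_eq_left.1 ((add_assoc _ _ _).symm.trans heq))
        exact (Fin.castSucc_lt_last i).ne (add_right_cancel this)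
      rw [← Fin.coeSucc_eq_succ, ← add_assoc, ← h _ hne, ih]
  have hlast : k₀ + 1 + Fin.last m = k₀ := by
    rw [add_assoc, add_comm 1, Fin.last_add_one, add_zero]
  simpa only [hlast] using walk (Fin.last m)

section BrokenCircuits

variable {d : ℕ} {ε : Type*}

def IsMonochromatic {β : Type*} (ends : ε → Sym2 (Fin d)) (w : Fin d → β) (e : ε) : Prop :=
  ((ends e).map w).IsDiag

theorem isMonochromatic_iff {β : Type*} {ends : ε → Sym2 (Fin d)} {w : Fin d → β} {e : ε}
    {i j : Fin d} (h : ends e = s(i, j)) : IsMonochromatic ends w e ↔ w i = w j := by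
  rw [IsMonochromatic, h, Sym2.map_mk, Sym2.mk_isDiag_iff]

theorem proper_iff_forall_not_isMonochromatic {β : Type*} (ends : ε → Sym2 (Fin d))
    (w : Fin d → β) : Proper ends w ↔ ∀ e, ¬ IsMonochromatic ends w e := by
  refine ⟨fun h e hmono => ?_, fun h e i j hij => (isMonochromatic_iff hij).not.1 (h e)⟩
  induction hends : ends e using Sym2.ind with
  | h i j => exact h e i j hends ((isMonochromatic_iff hends).1 hmono)

theorem pFun_components_apply (ends : ε → Sym2 (Fin d)) (S : Finset ε) (w : Fin d → ℕ) :
    pFun (components ends S) w = if ∀ e ∈ S, IsMonochromatic ends w e then 1 else 0 := by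
  refine if_congr ⟨fun h e he => ?_, fun h => ?_⟩ rfl rfl
  · induction hends : ends e using Sym2.ind with
    | h i j =>
      exact (isMonochromatic_iff hends).2 (h i j (Relation.EqvGen.rel i j ⟨e, he, hends⟩))
  · exact Setoid.eqvGen_le (s := Setoid.ker w) fun i j ⟨e, he, hends⟩ =>
      (isMonochromatic_iff hends).1 (h e he)

namespace Circuit

noncomputable def edges {ends : ε → Sym2 (Fin d)} (C : Circuit ends) : Finset ε :=
  Finset.univ.image C.f

noncomputable def maxEdge [LinearOrder ε] {ends : ε → Sym2 (Fin d)} (C : Circuit ends) : ε :=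
  C.edges.max' ⟨C.f 0, Finset.mem_image_of_mem _ (Finset.mem_univ _)⟩

variable {ends : ε → Sym2 (Fin d)} (C : Circuit ends)

theorem isMonochromatic_apply_of_forall_ne {β : Type*} (w : Fin d → β) (k₀ : Fin (C.m + 1))
    (h : ∀ k, k ≠ k₀ → IsMonochromatic ends w (C.f k)) : IsMonochromatic ends w (C.f k₀) := by
  rw [isMonochromatic_iff (C.he k₀)]
  exact Fin.apply_eq_apply_add_one_of_forall_ne (w ∘ C.v) k₀
    fun k hk => (isMonochromatic_iff (C.he k)).1 (h k hk)

variable [LinearOrder ε]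

theorem broken_eq : broken C = C.edges.erase C.maxEdge := rfl

theorem maxEdge_mem : C.maxEdge ∈ C.edges := Finset.max'_mem _ _

theorem le_maxEdge {e : ε} (he : e ∈ C.edges) : e ≤ C.maxEdge := Finset.le_max' _ _ he

theorem isMonochromatic_maxEdge {β : Type*} (w : Fin d → β)
    (h : ∀ e ∈ broken C, IsMonochromatic ends w e) : IsMonochromatic ends w C.maxEdge := by
  obtain ⟨k₀, -, hk₀⟩ := Finset.mem_image.1 C.maxEdge_mem
  rw [← hk₀]
  refine C.isMonochromatic_apply_of_forall_ne w k₀ fun k hk => h _ ?_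
  rw [broken_eq, ← hk₀]
  exact Finset.mem_erase.2 ⟨C.hf.ne hk, Finset.mem_image_of_mem _ (Finset.mem_univ _)⟩

end Circuit

variable [Fintype ε] [LinearOrder ε]

noncomputable def brokenCircuitComplex (ends : ε → Sym2 (Fin d)) : Finset (Finset ε) :=
  Finset.univ.filter fun S => ∀ C : Circuit ends, ¬ broken C ⊆ S

theorem mem_brokenCircuitComplex_of_subset {ends : ε → Sym2 (Fin d)} {S T : Finset ε}
    (hT : T ∈ brokenCircuitComplex ends) (hST : S ⊆ T) : S ∈ brokenCircuitComplex ends := by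
  simp only [brokenCircuitComplex, Finset.mem_filter, Finset.mem_univ, true_and] at hT ⊢
  exact fun C hC => hT C (hC.trans hST)

theorem insert_max'_mem_brokenCircuitComplex {ends : ε → Sym2 (Fin d)} {M S : Finset ε}
    (hM : ∀ C : Circuit ends, broken C ⊆ M → C.maxEdge ∈ M) (hne : M.Nonempty)
    (hS : S ∈ brokenCircuitComplex ends) (hSM : S ⊆ M) :
    insert (M.max' hne) S ∈ brokenCircuitComplex ends := by
  simp only [brokenCircuitComplex, Finset.mem_filter, Finset.mem_univ, true_and] at hS ⊢
  intro C hC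
  have hmax_le : C.maxEdge ≤ M.max' hne :=
    M.le_max' _ (hM C (hC.trans (Finset.insert_subset (M.max'_mem hne) hSM)))
  have hmem : M.max' hne ∈ broken C := by
    by_contra hnot
    exact hS C ((Finset.subset_insert_iff_of_notMem hnot).1 hC)
  rw [C.broken_eq, Finset.mem_erase] at hmem
  exact hmem.1 (le_antisymm (C.le_maxEdge hmem.2) hmax_le)

theorem sum_brokenCircuitComplex_subset {ends : ε → Sym2 (Fin d)} (M : Finset ε)
    (hM : ∀ C : Circuit ends, broken C ⊆ M → C.maxEdge ∈ M) :
    ∑ S ∈ (brokenCircuitComplex ends).filter (· ⊆ M), (-1 : ℚ) ^ S.card =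
      if M = ∅ then 1 else 0 := by
  split_ifs with hM₀
  · have hempty : ∅ ∈ brokenCircuitComplex ends := by
      simp only [brokenCircuitComplex, Finset.mem_filter, Finset.mem_univ, true_and]
      intro C hC
      simpa [hM₀] using hM C (hC.trans (Finset.empty_subset M))
    have : (brokenCircuitComplex ends).filter (· ⊆ M) = {∅} := by
      ext S
      simp only [Finset.mem_filter, Finset.mem_singleton, hM₀, Finset.subset_empty]
      exact ⟨And.right, by rintro rfl; exact ⟨hempty, rfl⟩⟩
    simp [this]
  · have hne := Finset.nonempty_iff_ne_empty.2 hM₀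
    refine Finset.sum_neg_one_pow_card_eq_zero_of_insert_erase_mem (M.max' hne)
      (fun S hS => ?_) (fun S hS => ?_) <;> rw [Finset.mem_filter] at hS ⊢
    · exact ⟨insert_max'_mem_brokenCircuitComplex hM hne hS.1 hS.2,
        Finset.insert_subset (M.max'_mem hne) hS.2⟩
    · exact ⟨mem_brokenCircuitComplex_of_subset hS.1 (Finset.erase_subset _ _),
        (Finset.erase_subset _ _).trans hS.2⟩

end BrokenCircuits

/-- Whitney-type theorem: `Y_G = Σ_{S ∈ B_G} (-1)^{|S|} p_{π(S)}` where `B_G`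
is the broken circuit complex for a fixed total order on the edges. -/
theorem Y_eq_sum_brokenCircuit {d : ℕ} {ε : Type*} [Fintype ε] [LinearOrder ε]
    (ends : ε → Sym2 (Fin d)) :
    Y ends = ∑ S : Finset ε,
      if (∀ C : Circuit ends, ¬ broken C ⊆ S) then
        ((-1 : ℚ) ^ S.card) • pFun (components ends S)
      else 0 := by
  funext w
  let M := Finset.univ.filter (IsMonochromatic ends w)
  have hM : ∀ C : Circuit ends, broken C ⊆ M → C.maxEdge ∈ M := fun C hC => by
    simpa [M] using C.isMonochromatic_maxEdge w fun e he => by simpa [M] using hC he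
  calc Y ends w = if M = ∅ then 1 else 0 := by
        simp only [Y, proper_iff_forall_not_isMonochromatic, Finset.filter_eq_empty_iff, M,
          Finset.mem_univ, true_implies]
    _ = ∑ S ∈ (brokenCircuitComplex ends).filter (· ⊆ M), (-1 : ℚ) ^ S.card :=
        (sum_brokenCircuitComplex_subset M hM).symm
    _ = _ := by
        rw [← Finset.sum_filter, Finset.sum_apply, Finset.sum_filter]
        refine Finset.sum_congr rfl fun S _ => ?_
        rw [Pi.smul_apply, smul_eq_mul, pFun_components_apply, mul_ite, mul_one, mul_zero]
        congr 1
        simp [M, Finset.subset_iff]
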